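/- arXiv:1012.3664 — 3 statements merged into one kernel-verified Lean document; each statement's English description precedes it below -/
import Mathlib

section
/- Let f₁, f₂ ∈ I be nonzero with S(f₁) > S(f₂) in the order μ'. Then f₁ + f₂ ≠ 0 and S(f₁ + f₂) = S(f₁). -/
open MvPolynomial

namespace F5

noncomputable section
open scoped Classical

/-- Monomials (power products) in `n` variables, represented by exponent vectors. -/
abbrev Mon (n : ℕ) : Type := Fin n →₀ ℕ

/-- Module terms `t·eₗ` of the free module `Pᵐ`. -/
abbrev MTerm (n m : ℕ) : Type := (Fin n →₀ ℕ) × Fin m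

/-- Action of a monomial on a module term: `u • (t eₗ) = (u t) eₗ`. -/
def mact {n m : ℕ} (u : Mon n) (σ : MTerm n m) : MTerm n m := (u + σ.1, σ.2)

/-- An admissible order on monomials: a linear order with `1 ≤ t` and
compatibility with multiplication. -/
structure AdmissibleOrder (n : ℕ) where
  ord : LinearOrder (Mon n)
  one_le : ∀ t : Mon n, ord.le 0 t
  mul_lt_mul : ∀ s t u : Mon n, ord.lt s t → ord.lt (u + s) (u + t)

/-- An admissible module order on module terms: a linear well-order compatible
with the monomial action, and such that `σ ≤ u σ`. -/
structure ModuleOrder (n m : ℕ) where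
  ord : LinearOrder (MTerm n m)
  wf : WellFounded ord.lt
  mul_lt_mul : ∀ (σ τ : MTerm n m) (u : Mon n), ord.lt σ τ → ord.lt (mact u σ) (mact u τ)
  le_mul : ∀ (σ : MTerm n m) (u : Mon n), ord.le σ (mact u σ)

variable {k : Type*} [Field k] {n m : ℕ}

/-- The leading monomial of a polynomial with respect to `μ` (junk value `0` for `f = 0`). -/
noncomputable def pLT (μ : AdmissibleOrder n) (f : MvPolynomial (Fin n) k) : Mon n :=
  if h : f.support.Nonempty then @Finset.max' _ μ.ord f.support h else 0

/-- The leading coefficient of a polynomial with respect to `μ`. -/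
noncomputable def pLC (μ : AdmissibleOrder n) (f : MvPolynomial (Fin n) k) : k :=
  f.coeff (pLT μ f)

/-- The set (finset) of module terms occurring in an element of `Pᵐ`. -/
noncomputable def msupport (u : Fin m → MvPolynomial (Fin n) k) : Finset (MTerm n m) :=
  letI := Classical.decEq (MTerm n m)
  Finset.univ.biUnion fun l => (u l).support.image fun t => (t, l)

/-- A junk default module term (needs `m ≠ 0`). -/
def mdefault [NeZero m] : MTerm n m := (0, ⟨0, Nat.pos_of_ne_zero (NeZero.ne m)⟩)

/-- The leading module term of a nonzero element of `Pᵐ` with respect to `μ'`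
(junk value for `0`). -/
noncomputable def mLT [NeZero m] (μ' : ModuleOrder n m) (u : Fin m → MvPolynomial (Fin n) k) :
    MTerm n m :=
  if h : (msupport u).Nonempty then @Finset.max' _ μ'.ord _ h else mdefault

/-- The map `v : Pᵐ → P`, `v(eᵢ) = fᵢ`. -/
noncomputable def vmap (F : Fin m → MvPolynomial (Fin n) k)
    (u : Fin m → MvPolynomial (Fin n) k) : MvPolynomial (Fin n) k :=
  ∑ i, u i * F i

/-- The ideal `I = (f₁, …, fₘ)`. -/
noncomputable def idealI (F : Fin m → MvPolynomial (Fin n) k) : Ideal (MvPolynomial (Fin n) k) :=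
  Ideal.span (Set.range F)

/-- `LT(Syz F)`: leading module terms of nonzero syzygies of `F`. -/
def LTSyz [NeZero m] (μ' : ModuleOrder n m) (F : Fin m → MvPolynomial (Fin n) k) :
    Set (MTerm n m) :=
  {σ | ∃ s : Fin m → MvPolynomial (Fin n) k, s ≠ 0 ∧ vmap F s = 0 ∧ mLT μ' s = σ}

/-- The signature `S(f)`: the `μ'`-minimum of `{LT(u) : v(u) = f}` (junk for `f = 0` or
`f ∉ I`). -/
noncomputable def sig [NeZero m] (μ' : ModuleOrder n m) (F : Fin m → MvPolynomial (Fin n) k)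
    (f : MvPolynomial (Fin n) k) : MTerm n m :=
  if hne : {σ : MTerm n m |
      ∃ u : Fin m → MvPolynomial (Fin n) k, u ≠ 0 ∧ vmap F u = f ∧ mLT μ' u = σ}.Nonempty
  then μ'.wf.min _ hne else mdefault

/-- `f` S-reduces to `g` with `h`, with respect to `σ`. -/
noncomputable def SReduces [NeZero m] (μ : AdmissibleOrder n) (μ' : ModuleOrder n m)
    (F : Fin m → MvPolynomial (Fin n) k)
    (f h g : MvPolynomial (Fin n) k) (σ : MTerm n m) : Prop :=
  ∃ (t : Mon n) (α : k), α ≠ 0 ∧ g = f - (monomial t α) * h ∧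
    (g = 0 ∨ μ.ord.lt (pLT μ g) (pLT μ f)) ∧
    μ'.ord.lt (sig μ' F ((monomial t (1 : k)) * h)) σ

/-- `f` is S-irreducible with respect to `σ`. -/
noncomputable def SIrr [NeZero m] (μ : AdmissibleOrder n) (μ' : ModuleOrder n m)
    (F : Fin m → MvPolynomial (Fin n) k) (f : MvPolynomial (Fin n) k) (σ : MTerm n m) : Prop :=
  f = 0 ∨ ¬ ∃ h : MvPolynomial (Fin n) k, h ∈ idealI F ∧ h ≠ 0 ∧
    ∃ g : MvPolynomial (Fin n) k, SReduces μ μ' F f h g σ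

/-- `G` is an S-Gröbner basis (of `I` w.r.t. `μ`, `F`, `μ'`). -/
noncomputable def IsSGB [NeZero m] (μ : AdmissibleOrder n) (μ' : ModuleOrder n m)
    (F : Fin m → MvPolynomial (Fin n) k) (G : Set (MvPolynomial (Fin n) k)) : Prop :=
  (∀ g ∈ G, g ∈ idealI F ∧ g ≠ 0) ∧
  ∀ f : MvPolynomial (Fin n) k, f ∈ idealI F → f ≠ 0 → SIrr μ μ' F f (sig μ' F f) →
    ∃ g ∈ G, ∃ t : Mon n,
      pLT μ ((monomial t (1 : k)) * g) = pLT μ f ∧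
      sig μ' F ((monomial t (1 : k)) * g) = sig μ' F f

/-- `LT(I)`: the set of leading monomials of nonzero elements of `I`. -/
def LTIdeal (μ : AdmissibleOrder n) (F : Fin m → MvPolynomial (Fin n) k) : Set (Mon n) :=
  {t | ∃ f : MvPolynomial (Fin n) k, f ∈ idealI F ∧ f ≠ 0 ∧ pLT μ f = t}

/-- `φ(t)`: the `μ'`-minimum signature of nonzero elements of `I` with leading monomial `t`. -/
noncomputable def phi [NeZero m] (μ : AdmissibleOrder n) (μ' : ModuleOrder n m)
    (F : Fin m → MvPolynomial (Fin n) k) (t : Mon n) : MTerm n m :=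
  if hne : {σ : MTerm n m | ∃ f : MvPolynomial (Fin n) k,
      f ∈ idealI F ∧ f ≠ 0 ∧ pLT μ f = t ∧ sig μ' F f = σ}.Nonempty
  then μ'.wf.min _ hne else mdefault

/-- `f` is a primitive S-irreducible polynomial. -/
noncomputable def PrimSIrr [NeZero m] (μ : AdmissibleOrder n) (μ' : ModuleOrder n m)
    (F : Fin m → MvPolynomial (Fin n) k) (f : MvPolynomial (Fin n) k) : Prop :=
  f ∈ idealI F ∧ f ≠ 0 ∧ SIrr μ μ' F f (sig μ' F f) ∧
  ¬ ∃ (f' : MvPolynomial (Fin n) k) (t : Mon n),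
      f' ∈ idealI F ∧ f' ≠ 0 ∧ t ≠ 0 ∧ SIrr μ μ' F f' (sig μ' F f') ∧
      pLT μ ((monomial t (1 : k)) * f') = pLT μ f ∧
      sig μ' F ((monomial t (1 : k)) * f') = sig μ' F f

/-- The lcm of two monomials (pointwise maximum of exponents). -/
def lcmMon {n : ℕ} (s t : Mon n) : Mon n := t + (s - t)

/-- The term `u₁ = lcm(LT g₁, LT g₂)/(LC g₁ · LT g₁)` (when the first argument is `g₁`). -/
noncomputable def uterm (μ : AdmissibleOrder n) (g₁ g₂ : MvPolynomial (Fin n) k) :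
    MvPolynomial (Fin n) k :=
  monomial (lcmMon (pLT μ g₁) (pLT μ g₂) - pLT μ g₁) (pLC μ g₁)⁻¹

/-- The S-polynomial of `g₁` and `g₂`. -/
noncomputable def Spol (μ : AdmissibleOrder n) (g₁ g₂ : MvPolynomial (Fin n) k) :
    MvPolynomial (Fin n) k :=
  uterm μ g₁ g₂ * g₁ - uterm μ g₂ g₁ * g₂

/-- `(g₁, g₂)` is a normal pair. -/
noncomputable def NormalPair [NeZero m] (μ : AdmissibleOrder n) (μ' : ModuleOrder n m)
    (F : Fin m → MvPolynomial (Fin n) k) (g₁ g₂ : MvPolynomial (Fin n) k) : Prop :=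
  PrimSIrr μ μ' F g₁ ∧ PrimSIrr μ μ' F g₂ ∧
  sig μ' F (uterm μ g₁ g₂ * g₁) =
    mact (lcmMon (pLT μ g₁) (pLT μ g₂) - pLT μ g₁) (sig μ' F g₁) ∧
  sig μ' F (uterm μ g₂ g₁ * g₂) =
    mact (lcmMon (pLT μ g₂) (pLT μ g₁) - pLT μ g₂) (sig μ' F g₂) ∧
  sig μ' F (uterm μ g₁ g₂ * g₁) ≠ sig μ' F (uterm μ g₂ g₁ * g₂)


end
end F5

/-! The signature behaves like a non-archimedean valuation: `S(-f) = S(f)`, and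
`S(f + g) ≤ max (S f) (S g)` since the sum of representations `u` of `f` and `w` of `g`
represents `f + g` and has leading module term at most `max (LT u) (LT w)`. This gives
`S(f₁ + f₂) ≤ S(f₁)`; writing `f₁ = (f₁ + f₂) + (-f₂)` with `S(-f₂) < S(f₁)` gives the reverse
inequality, and `f₁ + f₂ = 0` would force `S(f₂) = S(-f₁) = S(f₁)`. -/

namespace F5

variable {k : Type*} [Field k] {n m : ℕ}

section msupport

variable {u v : Fin m → MvPolynomial (Fin n) k}

lemma mem_msupport {σ : MTerm n m} : σ ∈ msupport u ↔ σ.1 ∈ (u σ.2).support := by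
  simp only [msupport, Finset.mem_biUnion, Finset.mem_image, Finset.mem_univ, true_and]
  exact ⟨fun ⟨_, _, ht, hσ⟩ => hσ ▸ ht, fun h => ⟨σ.2, σ.1, h, rfl⟩⟩

lemma msupport_nonempty_iff : (msupport u).Nonempty ↔ u ≠ 0 := by
  simp only [Finset.Nonempty, mem_msupport, Prod.exists, ne_eq, funext_iff, Pi.zero_apply,
    not_forall, ← MvPolynomial.support_eq_empty, ← Finset.nonempty_iff_ne_empty,
    Finset.Nonempty]
  exact exists_comm

lemma msupport_neg : msupport (-u) = msupport u := by
  ext σ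
  simp only [mem_msupport, Pi.neg_apply, MvPolynomial.support_neg]

lemma msupport_add_subset : msupport (u + v) ⊆ msupport u ∪ msupport v := fun σ hσ => by
  rw [mem_msupport, Pi.add_apply] at hσ
  simpa only [Finset.mem_union, mem_msupport] using MvPolynomial.support_add hσ

end msupport

lemma vmap_add (F u v : Fin m → MvPolynomial (Fin n) k) :
    vmap F (u + v) = vmap F u + vmap F v := by
  simp only [vmap, Pi.add_apply, add_mul, Finset.sum_add_distrib]

lemma vmap_neg (F u : Fin m → MvPolynomial (Fin n) k) : vmap F (-u) = -vmap F u := by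
  simp only [vmap, Pi.neg_apply, neg_mul, Finset.sum_neg_distrib]

section order

variable [NeZero m] (μ' : ModuleOrder n m)

lemma mLT_mem {u : Fin m → MvPolynomial (Fin n) k} (hu : u ≠ 0) : mLT μ' u ∈ msupport u := by
  rw [mLT, dif_pos (msupport_nonempty_iff.2 hu)]
  exact @Finset.max'_mem _ μ'.ord _ _

lemma le_mLT {u : Fin m → MvPolynomial (Fin n) k} {σ : MTerm n m} (hσ : σ ∈ msupport u) :
    μ'.ord.le σ (mLT μ' u) := by
  rw [mLT, dif_pos ⟨σ, hσ⟩]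
  exact @Finset.le_max' _ μ'.ord _ _ hσ

lemma mLT_neg (u : Fin m → MvPolynomial (Fin n) k) : mLT μ' (-u) = mLT μ' u := by
  rw [mLT, mLT, msupport_neg]

lemma mLT_add_le_or {u v : Fin m → MvPolynomial (Fin n) k} (huv : u + v ≠ 0) :
    μ'.ord.le (mLT μ' (u + v)) (mLT μ' u) ∨ μ'.ord.le (mLT μ' (u + v)) (mLT μ' v) :=
  (Finset.mem_union.1 (msupport_add_subset (mLT_mem μ' huv))).imp (le_mLT μ') (le_mLT μ')

variable (F : Fin m → MvPolynomial (Fin n) k)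

lemma sig_le_mLT {u : Fin m → MvPolynomial (Fin n) k} {f : MvPolynomial (Fin n) k}
    (hu : u ≠ 0) (hf : vmap F u = f) : μ'.ord.le (sig μ' F f) (mLT μ' u) := by
  have hne : {σ | ∃ u, u ≠ 0 ∧ vmap F u = f ∧ mLT μ' u = σ}.Nonempty := ⟨_, u, hu, hf, rfl⟩
  rw [sig, dif_pos hne]
  let _ := μ'.ord
  refine μ'.wf.min_le ?_
  exact ⟨u, hu, hf, rfl⟩

lemma exists_mLT_eq_sig {f : MvPolynomial (Fin n) k} (hf : f ∈ idealI F) (hf0 : f ≠ 0) :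
    ∃ u, u ≠ 0 ∧ vmap F u = f ∧ mLT μ' u = sig μ' F f := by
  obtain ⟨c, hc⟩ := Ideal.mem_span_range_iff_exists_fun.1 hf
  have hc0 : c ≠ 0 := by
    rintro rfl
    simp [← hc] at hf0
  have hne : {σ | ∃ u, u ≠ 0 ∧ vmap F u = f ∧ mLT μ' u = σ}.Nonempty := ⟨_, c, hc0, hc, rfl⟩
  rw [sig, dif_pos hne]
  exact μ'.wf.min_mem _ hne

lemma sig_neg (f : MvPolynomial (Fin n) k) : sig μ' F (-f) = sig μ' F f := by
  have hset : {σ | ∃ u, u ≠ 0 ∧ vmap F u = -f ∧ mLT μ' u = σ} =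
      {σ | ∃ u, u ≠ 0 ∧ vmap F u = f ∧ mLT μ' u = σ} := by
    have key : ∀ g : MvPolynomial (Fin n) k,
        {σ | ∃ u, u ≠ 0 ∧ vmap F u = -g ∧ mLT μ' u = σ} ⊆
          {σ | ∃ u, u ≠ 0 ∧ vmap F u = g ∧ mLT μ' u = σ} :=
      fun g σ ⟨u, hu, hug, huσ⟩ =>
        ⟨-u, neg_ne_zero.2 hu, by rw [vmap_neg, hug, neg_neg], by rw [mLT_neg, huσ]⟩
    refine (key f).antisymm ?_
    simpa only [neg_neg] using key (-f)
  rw [sig, sig, hset]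

lemma sig_add_le_or {f g : MvPolynomial (Fin n) k} (hf : f ∈ idealI F) (hg : g ∈ idealI F)
    (hf0 : f ≠ 0) (hg0 : g ≠ 0) (hfg : f + g ≠ 0) :
    μ'.ord.le (sig μ' F (f + g)) (sig μ' F f) ∨ μ'.ord.le (sig μ' F (f + g)) (sig μ' F g) := by
  obtain ⟨u, -, rfl, hu⟩ := exists_mLT_eq_sig μ' F hf hf0
  obtain ⟨w, -, rfl, hw⟩ := exists_mLT_eq_sig μ' F hg hg0
  have huw : u + w ≠ 0 := by
    rintro h
    apply hfg
    rw [← vmap_add, h]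
    simp only [vmap, Pi.zero_apply, zero_mul, Finset.sum_const_zero]
  have hle := sig_le_mLT μ' F huw (vmap_add F u w)
  rw [← hu, ← hw]
  exact (mLT_add_le_or μ' huw).imp (μ'.ord.le_trans _ _ _ hle) (μ'.ord.le_trans _ _ _ hle)

end order

end F5

open F5 MvPolynomial

/-- if `S(f₁) > S(f₂)` then `f₁ + f₂ ≠ 0` and `S(f₁ + f₂) = S(f₁)`. -/
theorem stmt_0 {k : Type*} [Field k] {n m : ℕ} [NeZero m]
    (μ' : ModuleOrder n m) (F : Fin m → MvPolynomial (Fin n) k)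
    (f₁ f₂ : MvPolynomial (Fin n) k)
    (hf₁I : f₁ ∈ idealI F) (hf₂I : f₂ ∈ idealI F)
    (hf₁ : f₁ ≠ 0) (hf₂ : f₂ ≠ 0)
    (hlt : μ'.ord.lt (sig μ' F f₂) (sig μ' F f₁)) :
    f₁ + f₂ ≠ 0 ∧ sig μ' F (f₁ + f₂) = sig μ' F f₁ := by
  have hle_not_ge := (μ'.ord.lt_iff_le_not_ge _ _).1 hlt
  have hsum : f₁ + f₂ ≠ 0 := by
    intro h
    rw [eq_neg_of_add_eq_zero_right h, sig_neg] at hle_not_ge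
    exact hle_not_ge.2 (μ'.ord.le_refl _)
  refine ⟨hsum, μ'.ord.le_antisymm _ _ ?_ ?_⟩
  · exact (sig_add_le_or μ' F hf₁I hf₂I hf₁ hf₂ hsum).elim id
      fun h => μ'.ord.le_trans _ _ _ h hle_not_ge.1
  · have h := sig_add_le_or μ' F (add_mem hf₁I hf₂I) (neg_mem hf₂I) hsum (neg_ne_zero.2 hf₂)
      (by rwa [add_neg_cancel_right])
    rw [add_neg_cancel_right, sig_neg] at h
    exact h.resolve_right hle_not_ge.2
end

section
/- A nonzero f ∈ I is S-irreducible (with respect to S(f)) if and only if S(f) = φ(LT(f)). -/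
open MvPolynomial

open F5 MvPolynomial

/-!
Every `p ∈ I \ {0}` with `LT(p) = LT(f)` has `S(p) ≥ φ(LT(f))`, and `S(f)` is one of these values.
If some such `p` has `S(p) < S(f)`, subtracting `(LC(f)/LC(p)) p` cancels the leading term of `f`,
an S-reduction. Conversely an S-reduction `f ↦ f - α t h` lowers the leading monomial only if
`LT(t h) = LT(f)`, so `p = t h` has `S(p) < S(f)`. Hence `f` is S-irreducible iff no `p` undercuts
`S(f)`, i.e. iff `S(f)` is the minimum `φ(LT(f))`.
-/

namespace F5

variable {k : Type*} [Field k] {n m : ℕ}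

section LeadingTerm

variable (μ : AdmissibleOrder n) {f g p : MvPolynomial (Fin n) k}

theorem pLT_mem_support (hf : f ≠ 0) : pLT μ f ∈ f.support := by
  have hne : f.support.Nonempty := support_nonempty.mpr hf
  rw [pLT, dif_pos hne]
  exact @Finset.max'_mem _ μ.ord _ hne

theorem le_pLT_of_mem_support {s : Mon n} (hs : s ∈ f.support) : μ.ord.le s (pLT μ f) := by
  rw [pLT, dif_pos ⟨s, hs⟩]
  exact @Finset.le_max' _ μ.ord _ _ hs

theorem pLC_ne_zero (hf : f ≠ 0) : pLC μ f ≠ 0 :=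
  mem_support_iff.mp (pLT_mem_support μ hf)

theorem pLT_smul {α : k} (hα : α ≠ 0) (p : MvPolynomial (Fin n) k) :
    pLT μ (α • p) = pLT μ p := by
  rw [pLT, pLT, support_smul_eq hα]

theorem sub_ne_zero_and_pLT_sub_eq (hf : f ≠ 0)
    (hg : g = 0 ∨ μ.ord.lt (pLT μ g) (pLT μ f)) :
    f - g ≠ 0 ∧ pLT μ (f - g) = pLT μ f := by
  -- `Mon n` already carries the pointwise order of `Finsupp`; these local instances take
  -- precedence over it, so that `≤` and `<` below are those of `μ`.
  let _ : PartialOrder (Mon n) := μ.ord.toPartialOrder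
  let _ : Preorder (Mon n) := μ.ord.toPreorder
  have hg_lt : ∀ s ∈ g.support, s < pLT μ f := fun s hs => by
    rcases hg with rfl | hlt
    · simp at hs
    · exact (le_pLT_of_mem_support μ hs).trans_lt hlt
  have hcoeff : (f - g).coeff (pLT μ f) = pLC μ f := by
    rw [coeff_sub, notMem_support_iff.mp fun hs => (hg_lt _ hs).false, sub_zero, pLC]
  have hfg : f - g ≠ 0 := fun h => pLC_ne_zero μ hf (by rw [← hcoeff, h, coeff_zero])
  refine ⟨hfg, le_antisymm ?_ (le_pLT_of_mem_support μ ?_)⟩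
  · rcases Finset.mem_union.mp (support_sub _ f g (pLT_mem_support μ hfg)) with hs | hs
    · exact le_pLT_of_mem_support μ hs
    · exact (hg_lt _ hs).le
  · rw [mem_support_iff, hcoeff]
    exact pLC_ne_zero μ hf

theorem pLT_sub_div_smul_lt (hp : p ≠ 0) (hLT : pLT μ p = pLT μ f) :
    f - (pLC μ f / pLC μ p) • p = 0 ∨
      μ.ord.lt (pLT μ (f - (pLC μ f / pLC μ p) • p)) (pLT μ f) := by
  let _ : PartialOrder (Mon n) := μ.ord.toPartialOrder
  let _ : Preorder (Mon n) := μ.ord.toPreorder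
  set g := f - (pLC μ f / pLC μ p) • p
  by_cases hg : g = 0
  · exact Or.inl hg
  refine Or.inr (lt_of_le_of_ne ?_ fun hgf => mem_support_iff.mp (pLT_mem_support μ hg) ?_)
  · rcases Finset.mem_union.mp (support_sub _ _ _ (pLT_mem_support μ hg)) with hs | hs
    · exact le_pLT_of_mem_support μ hs
    · exact hLT ▸ le_pLT_of_mem_support μ (support_smul hs)
  · rw [hgf, coeff_sub, coeff_smul, ← hLT, ← pLC, hLT, ← pLC, smul_eq_mul,
      div_mul_cancel₀ _ (pLC_ne_zero μ hp), sub_self]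

end LeadingTerm

variable [NeZero m] (μ : AdmissibleOrder n) (μ' : ModuleOrder n m)
  (F : Fin m → MvPolynomial (Fin n) k)

-- A reduction `f - α t h` yields the witness `p = t h`; a witness `p` reduces `f` with `t = 1`.
theorem sIrr_iff_forall {f : MvPolynomial (Fin n) k} (hf : f ≠ 0) {σ : MTerm n m} :
    SIrr μ μ' F f σ ↔ ∀ p ∈ idealI F, p ≠ 0 → pLT μ p = pLT μ f →
      ¬ μ'.ord.lt (sig μ' F p) σ := by
  simp only [SIrr, SReduces, hf, false_or]
  constructor
  · intro hirr p hpI hp hLT hlt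
    refine hirr ⟨p, hpI, hp, _, 0, pLC μ f / pLC μ p,
      div_ne_zero (pLC_ne_zero μ hf) (pLC_ne_zero μ hp), ?_, pLT_sub_div_smul_lt μ hp hLT, ?_⟩
    · rw [monomial_zero', C_mul']
    · rwa [monomial_zero', C_1, one_mul]
  · rintro H ⟨h, hhI, hh, _, t, α, hα, rfl, hlt, hsig⟩
    have hfg : f - (f - monomial t α * h) = α • (monomial t 1 * h) := by
      rw [sub_sub_cancel, ← C_mul', ← mul_assoc, C_mul_monomial, mul_one]
    obtain ⟨hp, hLT⟩ := sub_ne_zero_and_pLT_sub_eq μ hf hlt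
    rw [hfg] at hp hLT
    exact H _ (Ideal.mul_mem_left _ _ hhI) (right_ne_zero_of_smul hp)
      (by rwa [pLT_smul μ hα] at hLT) hsig

end F5

/-- a nonzero `f ∈ I` is S-irreducible iff `S(f) = φ(LT(f))`. -/
theorem stmt_8 {k : Type*} [Field k] {n m : ℕ} [NeZero m]
    (μ : AdmissibleOrder n) (μ' : ModuleOrder n m)
    (F : Fin m → MvPolynomial (Fin n) k)
    (f : MvPolynomial (Fin n) k) (hfI : f ∈ idealI F) (hf : f ≠ 0) :
    SIrr μ μ' F f (sig μ' F f) ↔ sig μ' F f = phi μ μ' F (pLT μ f) := by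
  have hmem : sig μ' F f ∈ {σ | ∃ p, p ∈ idealI F ∧ p ≠ 0 ∧ pLT μ p = pLT μ f ∧
      sig μ' F p = σ} := ⟨f, hfI, hf, rfl, rfl⟩
  rw [sIrr_iff_forall μ μ' F hf, phi, dif_pos ⟨_, hmem⟩]
  constructor
  · intro hmin
    refine (μ'.wf.min_eq_of_forall_not_lt hmem ?_).symm
    rintro _ ⟨p, hpI, hp, hLT, rfl⟩
    exact hmin p hpI hp hLT
  · intro hsig p hpI hp hLT
    rw [hsig]
    apply μ'.wf.not_lt_min
    exact ⟨p, hpI, hp, hLT, rfl⟩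
end

section
/- If G is an S-Gröbner basis, then G is a Gröbner basis of I with respect to μ; that is, G ⊆ I, G generates I, and for every nonzero f ∈ I there exists g ∈ G such that LT(g) divides LT(f). -/
open MvPolynomial

/-!
Take a nonzero `f ∈ I`. Among the nonzero elements of `I` with leading monomial `LT(f)`, one
whose signature is minimal, i.e. equal to `φ(LT f)`, is S-irreducible: an S-reduction of it by
`α t h` would make `α t h` an element of `I` with the same leading monomial and a smaller
signature. The S-Gröbner property then yields `g ∈ G` with `LT(g) ∣ LT(f)`. Consequently `G`
generates `I`: dividing `f ∈ I` by `G`, the remainder lies in `I` and none of its monomials is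
divisible by a leading monomial of `G`, so it vanishes.
-/

theorem MonomialOrder.span_eq_of_exists_degree_le {σ R : Type*} [CommRing R]
    (m : MonomialOrder σ) {G : Set (MvPolynomial σ R)} {I : Ideal (MvPolynomial σ R)}
    (hGI : G ⊆ I) (hG : ∀ g ∈ G, IsUnit (m.leadingCoeff g))
    (hdeg : ∀ f ∈ I, f ≠ 0 → ∃ g ∈ G, m.degree g ≤ m.degree f) :
    Ideal.span G = I := by
  refine le_antisymm (Ideal.span_le.mpr hGI) fun f hf => ?_
  obtain ⟨q, r, hfqr, -, hr⟩ := m.div_set hG f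
  have hq : Finsupp.linearCombination _ (Subtype.val : G → _) q ∈ Ideal.span G := by
    simpa only [Finsupp.range_linearCombination, Subtype.range_coe] using
      LinearMap.mem_range_self (Finsupp.linearCombination _ (Subtype.val : G → _)) q
  have hr0 : r = 0 := by
    by_contra hr0
    have hrI : r ∈ I := by
      rw [eq_sub_of_add_eq' hfqr.symm]
      exact I.sub_mem hf (Ideal.span_le.mpr hGI hq)
    obtain ⟨g, hg, hle⟩ := hdeg r hrI hr0
    exact hr _ (m.degree_mem_support hr0) g hg hle
  rw [hfqr, hr0, add_zero]
  exact hq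

namespace F5

namespace AdmissibleOrder

variable {n : ℕ} (μ : AdmissibleOrder n)

/-- `Mon n` ordered by `μ`: the synonym through which `μ` becomes a Mathlib `MonomialOrder`. -/
def Syn (_μ : AdmissibleOrder n) : Type := Mon n

noncomputable instance : AddCommMonoid μ.Syn := inferInstanceAs (AddCommMonoid (Mon n))

instance : LinearOrder μ.Syn := μ.ord

noncomputable def toSyn : Mon n ≃+ μ.Syn := AddEquiv.refl (Mon n)

theorem toSyn_add_le_add_right {s t : Mon n} (h : μ.toSyn s ≤ μ.toSyn t) (u : Mon n) :
    μ.toSyn (s + u) ≤ μ.toSyn (t + u) := by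
  rw [add_comm s, add_comm t]
  exact h.eq_or_lt.elim (fun hst => by rw [μ.toSyn.injective hst])
    fun hst => le_of_lt (μ.mul_lt_mul s t u hst)

theorem monotone_toSyn : Monotone μ.toSyn := by
  intro s t h
  obtain ⟨u, rfl⟩ := exists_add_of_le h
  have hu : μ.toSyn 0 ≤ μ.toSyn u := μ.one_le u
  simpa only [zero_add, add_comm u] using μ.toSyn_add_le_add_right hu s

instance : IsOrderedAddMonoid μ.Syn where
  add_le_add_left a b h c := μ.toSyn_add_le_add_right (s := a) (t := b) h c

-- Dickson's lemma: a linear order refining divisibility of monomials is a well-order.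
instance : WellFoundedLT μ.Syn :=
  wellQuasiOrderedLE_iff_wellFoundedLT.mp
    (μ.monotone_toSyn.wellQuasiOrderedLE_of_wellQuasiOrderedLE_of_surjective μ.toSyn.surjective)

noncomputable def toMonomialOrder : MonomialOrder (Fin n) where
  syn := μ.Syn
  toSyn := μ.toSyn
  toSyn_monotone := μ.monotone_toSyn

end AdmissibleOrder

variable {k : Type*} [Field k] {n : ℕ}

theorem pLT_eq_degree (μ : AdmissibleOrder n) (f : MvPolynomial (Fin n) k) :
    pLT μ f = μ.toMonomialOrder.degree f := by
  rcases eq_or_ne f 0 with rfl | hf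
  · simp [pLT]
  have hne := support_nonempty.mpr hf
  rw [pLT, dif_pos hne]
  refine μ.toSyn.injective (le_antisymm ?_ ?_)
  · exact @Finset.max'_le _ μ.ord _ hne _ fun s hs => μ.toMonomialOrder.le_degree hs
  · exact @Finset.le_max' _ μ.ord _ _ (μ.toMonomialOrder.degree_mem_support hf)

theorem pLT_monomial_mul (μ : AdmissibleOrder n) (t : Mon n) {c : k} (hc : c ≠ 0)
    {g : MvPolynomial (Fin n) k} (hg : g ≠ 0) : pLT μ (monomial t c * g) = t + pLT μ g := by
  classical
  simp only [pLT_eq_degree]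
  rw [μ.toMonomialOrder.degree_mul (monomial_eq_zero.not.mpr hc) hg,
    μ.toMonomialOrder.degree_monomial, if_neg hc]

theorem pLT_sub_of_lt (μ : AdmissibleOrder n) {f g : MvPolynomial (Fin n) k}
    (h : μ.ord.lt (pLT μ g) (pLT μ f)) : pLT μ (f - g) = pLT μ f := by
  simp only [pLT_eq_degree] at h ⊢
  exact μ.toMonomialOrder.degree_sub_of_lt h

section Signature

variable {m : ℕ} (F : Fin m → MvPolynomial (Fin n) k)

theorem vmap_smul (β : k) (u : Fin m → MvPolynomial (Fin n) k) :
    vmap F (β • u) = β • vmap F u := by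
  simp only [vmap, Finset.smul_sum, Pi.smul_apply, smul_mul_assoc]

theorem msupport_smul {β : k} (hβ : β ≠ 0) (u : Fin m → MvPolynomial (Fin n) k) :
    msupport (β • u) = msupport u := by
  simp only [msupport, Pi.smul_apply, MvPolynomial.support_smul_eq hβ]

variable [NeZero m] (μ' : ModuleOrder n m)

theorem sig_smul {β : k} (hβ : β ≠ 0) (p : MvPolynomial (Fin n) k) :
    sig μ' F (β • p) = sig μ' F p := by
  have hset : {σ : MTerm n m | ∃ u, u ≠ 0 ∧ vmap F u = β • p ∧ mLT μ' u = σ}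
      = {σ : MTerm n m | ∃ u, u ≠ 0 ∧ vmap F u = p ∧ mLT μ' u = σ} := by
    ext σ
    constructor
    · rintro ⟨u, hu, hv, rfl⟩
      refine ⟨β⁻¹ • u, smul_ne_zero (inv_ne_zero hβ) hu, ?_, ?_⟩
      · rw [vmap_smul, hv, inv_smul_smul₀ hβ]
      · simp only [mLT, msupport_smul (inv_ne_zero hβ)]
    · rintro ⟨u, hu, hv, rfl⟩
      refine ⟨β • u, smul_ne_zero hβ hu, by rw [vmap_smul, hv], ?_⟩
      simp only [mLT, msupport_smul hβ]
  unfold sig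
  rw [hset]

variable (μ : AdmissibleOrder n)

theorem exists_sig_eq_phi {f : MvPolynomial (Fin n) k} (hf : f ∈ idealI F) (hf0 : f ≠ 0) :
    ∃ f', f' ∈ idealI F ∧ f' ≠ 0 ∧ pLT μ f' = pLT μ f ∧
      sig μ' F f' = phi μ μ' F (pLT μ f) := by
  have hne : {σ | ∃ f', f' ∈ idealI F ∧ f' ≠ 0 ∧ pLT μ f' = pLT μ f ∧
      sig μ' F f' = σ}.Nonempty :=
    ⟨_, f, hf, hf0, rfl, rfl⟩
  rw [phi, dif_pos hne]
  exact μ'.wf.min_mem _ hne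

theorem not_sig_lt_phi {f : MvPolynomial (Fin n) k} (hf : f ∈ idealI F) (hf0 : f ≠ 0) :
    ¬ μ'.ord.lt (sig μ' F f) (phi μ μ' F (pLT μ f)) := by
  have hmem : sig μ' F f ∈
      {σ | ∃ f', f' ∈ idealI F ∧ f' ≠ 0 ∧ pLT μ f' = pLT μ f ∧ sig μ' F f' = σ} :=
    ⟨f, hf, hf0, rfl, rfl⟩
  rw [phi, dif_pos ⟨_, hmem⟩]
  exact μ'.wf.not_lt_min _ hmem

variable {F μ' μ}

theorem sIrr_of_sig_eq_phi {f : MvPolynomial (Fin n) k}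
    (hsig : sig μ' F f = phi μ μ' F (pLT μ f)) : SIrr μ μ' F f (sig μ' F f) := by
  refine Or.inr ?_
  rintro ⟨h, hh, hh0, g, t, α, hα, hg, hlt, hsig_lt⟩
  have hLT : pLT μ (monomial t α * h) = pLT μ f := by
    have hM : monomial t α * h = f - g := by rw [hg, sub_sub_cancel]
    rcases hlt with rfl | hlt
    · rw [hM, sub_zero]
    · rw [hM, pLT_sub_of_lt μ hlt]
  have hth : monomial t α * h = α • (monomial t 1 * h) := by
    rw [smul_eq_C_mul, ← mul_assoc, C_mul_monomial, mul_one]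
  refine not_sig_lt_phi F μ' μ (f := monomial t α * h) (Ideal.mul_mem_left _ _ hh)
    (mul_ne_zero (monomial_eq_zero.not.mpr hα) hh0) ?_
  rw [hLT, hth, sig_smul F μ' hα, ← hsig]
  exact hsig_lt

theorem IsSGB.exists_pLT_eq_add {G : Set (MvPolynomial (Fin n) k)} (hG : IsSGB μ μ' F G)
    {f : MvPolynomial (Fin n) k} (hf : f ∈ idealI F) (hf0 : f ≠ 0) :
    ∃ g ∈ G, ∃ u : Mon n, pLT μ f = u + pLT μ g := by
  obtain ⟨f', hf', hf'0, hLT, hsig⟩ := exists_sig_eq_phi F μ' μ hf hf0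
  obtain ⟨g, hgG, t, htg, -⟩ := hG.2 f' hf' hf'0 (sIrr_of_sig_eq_phi (by rw [hsig, hLT]))
  refine ⟨g, hgG, t, ?_⟩
  rw [← hLT, ← htg, pLT_monomial_mul μ t one_ne_zero (hG.1 g hgG).2]

theorem IsSGB.span_eq {G : Set (MvPolynomial (Fin n) k)} (hG : IsSGB μ μ' F G) :
    Ideal.span G = idealI F := by
  refine μ.toMonomialOrder.span_eq_of_exists_degree_le (fun g hg => (hG.1 g hg).1)
    (fun g hg => (μ.toMonomialOrder.leadingCoeff_ne_zero_iff.mpr (hG.1 g hg).2).isUnit)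
    fun f hf hf0 => ?_
  obtain ⟨g, hg, u, hu⟩ := hG.exists_pLT_eq_add hf hf0
  refine ⟨g, hg, ?_⟩
  rw [← pLT_eq_degree, ← pLT_eq_degree, hu]
  exact le_add_self

end Signature

end F5

open F5

/-- an S-Gröbner basis is a Gröbner basis of `I` w.r.t. `μ`. -/
theorem stmt_10 {k : Type*} [Field k] {n m : ℕ} [NeZero m]
    (μ : AdmissibleOrder n) (μ' : ModuleOrder n m)
    (F : Fin m → MvPolynomial (Fin n) k)
    (G : Set (MvPolynomial (Fin n) k)) (hG : IsSGB μ μ' F G) :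
    (∀ g ∈ G, g ∈ idealI F) ∧
    Ideal.span G = idealI F ∧
    ∀ f : MvPolynomial (Fin n) k, f ∈ idealI F → f ≠ 0 →
      ∃ g ∈ G, ∃ u : Mon n, pLT μ f = u + pLT μ g :=
  ⟨fun g hg => (hG.1 g hg).1, hG.span_eq, fun _ hf hf0 => hG.exists_pLT_eq_add hf hf0⟩
end
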